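/- arXiv:2412.01049 — 2 statements merged into one kernel-verified Lean document; each statement's English description precedes it below -/
import Mathlib

section
/- Let X be an ℕ² shift over a finite alphabet A and let a ∈ A. Then there exists a point x ∈ X such that the upper density of the set χ_a(x) = {(i,j) ∈ ℕ² : x_{i,j} = a} equals Fr_a(X), i.e., d̄(χ_a(x)) = Fr_a(X). -/
/-!
Covering a large box by translates of a `k₁ × k₂` window shows that every point of `X` has
upper density at most `M^a_{k₁,k₂}(X) / (k₁ k₂)`, hence at most `Fr_a(X)`.

Conversely, choose scales `s_j → ∞` with `M^a_{s_j,s_j}(X) ≤ (Fr_a(X) + ε_j δ_j) s_j²`, where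
`ε_j → 0` and `∑ δ_j < 1`. In a point of `X` realising `M^a_{n,n}(X)` on a large box `[0,n)²`,
the `s_j`-windows average at least about `Fr_a(X) s_j²` and none exceeds the bound above, so by
Markov's inequality at most a `δ_j`-fraction of them contain fewer than `(Fr_a(X) - ε_j) s_j²`
symbols `a`. Hence for finitely many scales some corner is good for all of them at once, and
translating it to the origin gives a point of `X`. By compactness one point of `X` is good at
every scale, and its upper density is at least `Fr_a(X)`.
-/

open Filter

/-- `X` is an `ℕ²` shift over the alphabet `A`: a closed subset of `A ^ (ℕ×ℕ)`
invariant under the two one-sided coordinate shift maps. -/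
def IsN2Shift {A : Type*} [TopologicalSpace A] (X : Set (ℕ × ℕ → A)) : Prop :=
  IsClosed X ∧ (∀ x ∈ X, (fun p : ℕ × ℕ => x (p.1 + 1, p.2)) ∈ X) ∧
    (∀ x ∈ X, (fun p : ℕ × ℕ => x (p.1, p.2 + 1)) ∈ X)

/-- `‖x|_{[0,k₁)×[0,k₂)}‖_a`: the number of occurrences of the symbol `a`
in the restriction of `x` to the box `[0,k₁) × [0,k₂)`. -/
def occCount {A : Type*} [DecidableEq A] (x : ℕ × ℕ → A) (a : A) (k₁ k₂ : ℕ) : ℕ :=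
  ((Finset.range k₁ ×ˢ Finset.range k₂).filter fun p => x p = a).card

/-- `M^a_{k₁,k₂}(X)`: the maximal number of occurrences of `a` in a `k₁ × k₂` block of `X`. -/
noncomputable def maxOcc {A : Type*} [DecidableEq A] (X : Set (ℕ × ℕ → A)) (a : A)
    (k₁ k₂ : ℕ) : ℕ :=
  sSup {m : ℕ | ∃ x ∈ X, m = occCount x a k₁ k₂}

/-- `Fr_a(X) = inf_{k₁,k₂ ≥ 1} M^a_{k₁,k₂}(X)/(k₁·k₂)`
(by subadditivity this infimum is also the limit as `k₁,k₂ → ∞`). -/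
noncomputable def freqSup {A : Type*} [DecidableEq A] (X : Set (ℕ × ℕ → A)) (a : A) : ℝ :=
  sInf {r : ℝ | ∃ k₁ k₂ : ℕ, 1 ≤ k₁ ∧ 1 ≤ k₂ ∧ r = (maxOcc X a k₁ k₂ : ℝ) / (k₁ * k₂)}

/-- The upper density of a set `S ⊆ ℕ²`:
`limsup_{n₁,n₂ → ∞} |S ∩ ([0,n₁)×[0,n₂))| / (n₁·n₂)`. -/
noncomputable def upperDensity2 (S : Set (ℕ × ℕ)) : ℝ :=
  limsup (fun n : ℕ × ℕ =>
    ((S ∩ {p | p.1 < n.1 ∧ p.2 < n.2}).ncard : ℝ) / (n.1 * n.2)) atTop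

open Topology

def shiftBy {A : Type*} (x : ℕ × ℕ → A) (v : ℕ × ℕ) : ℕ × ℕ → A := fun p => x (p + v)

section Counting

variable {A : Type*} [DecidableEq A]

lemma occCount_le (x : ℕ × ℕ → A) (a : A) (k l : ℕ) : occCount x a k l ≤ k * l :=
  (Finset.card_filter_le _ _).trans_eq (by simp)

lemma occCount_mono (x : ℕ × ℕ → A) (a : A) {k k' l l' : ℕ} (hk : k ≤ k') (hl : l ≤ l') :
    occCount x a k l ≤ occCount x a k' l' :=
  Finset.card_le_card <| Finset.filter_subset_filter _ <|
    Finset.product_subset_product (Finset.range_subset_range.2 hk) (Finset.range_subset_range.2 hl)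

/-- Both sides count the pairs `(u, v)` with `x (u + v) = a`. -/
lemma sum_occCount_shiftBy_comm (x : ℕ × ℕ → A) (a : A) (k₁ k₂ T₁ T₂ : ℕ) :
    ∑ v ∈ Finset.range T₁ ×ˢ Finset.range T₂, occCount (shiftBy x v) a k₁ k₂ =
      ∑ u ∈ Finset.range k₁ ×ˢ Finset.range k₂, occCount (shiftBy x u) a T₁ T₂ := by
  unfold occCount shiftBy
  simp only [Finset.card_filter]
  rw [Finset.sum_comm]
  simp only [add_comm]

lemma occCount_le_occCount_shiftBy_add (x : ℕ × ℕ → A) (a : A) {n₁ n₂ T₁ T₂ : ℕ} (u : ℕ × ℕ)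
    (h₁ : u.1 + T₁ ≤ n₁) (h₂ : u.2 + T₂ ≤ n₂) :
    occCount x a n₁ n₂ ≤ occCount (shiftBy x u) a T₁ T₂ + (n₁ * n₂ - T₁ * T₂) := by
  set R := Finset.range n₁ ×ˢ Finset.range n₂
  set W := (Finset.range T₁ ×ˢ Finset.range T₂).map (addRightEmbedding u)
  have hWR : W ⊆ R := by
    intro p hp
    simp only [W, R, Finset.mem_map, Finset.mem_product, Finset.mem_range,
      addRightEmbedding_apply] at hp ⊢
    obtain ⟨q, ⟨hq₁, hq₂⟩, rfl⟩ := hp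
    simp only [Prod.fst_add, Prod.snd_add]
    omega
  have hW : occCount (shiftBy x u) a T₁ T₂ = (W.filter (x · = a)).card := by
    rw [Finset.filter_map, Finset.card_map]
    rfl
  have hRW : (R \ W).card = n₁ * n₂ - T₁ * T₂ := by
    rw [Finset.card_sdiff_of_subset hWR]
    simp [R, W]
  calc occCount x a n₁ n₂ ≤ (W.filter (x · = a) ∪ R \ W).card := by
        refine Finset.card_le_card fun p hp => ?_
        simp only [Finset.mem_union, Finset.mem_filter, Finset.mem_sdiff] at hp ⊢
        tauto
    _ ≤ _ := by rw [hW, ← hRW]; exact Finset.card_union_le _ _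

/-- Each translate `u + [0,T₁)×[0,T₂)`, `u ∈ [0,k₁)×[0,k₂)`, misses at most `n₁ n₂ - T₁ T₂`
cells of the box `[0,n₁)×[0,n₂)`. -/
lemma mul_occCount_le_sum_add (x : ℕ × ℕ → A) (a : A) {k₁ k₂ T₁ T₂ n₁ n₂ : ℕ}
    (h₁ : T₁ + k₁ ≤ n₁) (h₂ : T₂ + k₂ ≤ n₂) :
    k₁ * k₂ * occCount x a n₁ n₂ ≤
      ∑ v ∈ Finset.range T₁ ×ˢ Finset.range T₂, occCount (shiftBy x v) a k₁ k₂ +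
        k₁ * k₂ * (n₁ * n₂ - T₁ * T₂) := by
  rw [sum_occCount_shiftBy_comm]
  calc k₁ * k₂ * occCount x a n₁ n₂
      = ∑ _u ∈ Finset.range k₁ ×ˢ Finset.range k₂, occCount x a n₁ n₂ := by simp
    _ ≤ ∑ u ∈ Finset.range k₁ ×ˢ Finset.range k₂,
          (occCount (shiftBy x u) a T₁ T₂ + (n₁ * n₂ - T₁ * T₂)) := by
        refine Finset.sum_le_sum fun u hu => ?_
        simp only [Finset.mem_product, Finset.mem_range] at hu
        exact occCount_le_occCount_shiftBy_add x a u (by omega) (by omega)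
    _ = _ := by simp [Finset.sum_add_distrib]

/-- Markov's inequality: by double counting, the `s × s` windows of `z` average at least about
`c s²` occurrences of `a`, and none has more than `(c + η) s²`. -/
lemma card_filter_occCount_shiftBy_lt_mul_le {z : ℕ × ℕ → A} {a : A} {c ε η : ℝ} {n T s : ℕ}
    (hs : 0 < s) (hTs : T + s ≤ n) (hc : 0 ≤ c) (hη : 0 ≤ η)
    (hwin : ∀ v, (occCount (shiftBy z v) a s s : ℝ) ≤ (c + η) * s ^ 2)
    (hz : c * n ^ 2 ≤ occCount z a n n) :
    (((Finset.range T ×ˢ Finset.range T).filter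
        fun v => (occCount (shiftBy z v) a s s : ℝ) < (c - ε) * s ^ 2).card : ℝ) * ε ≤
      η * T ^ 2 + (n ^ 2 - T ^ 2) := by
  set V := Finset.range T ×ˢ Finset.range T
  set f : ℕ × ℕ → ℝ := fun v => occCount (shiftBy z v) a s s
  set P : ℕ × ℕ → Prop := fun v => f v < (c - ε) * s ^ 2
  change ((V.filter P).card : ℝ) * ε ≤ _
  have hTn : T * T ≤ n * n := Nat.mul_le_mul (by omega) (by omega)
  have hcount : (s : ℝ) ^ 2 * occCount z a n n ≤ ∑ v ∈ V, f v + s ^ 2 * (n ^ 2 - T ^ 2) := by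
    have hR := Nat.cast_le (α := ℝ) |>.2 (mul_occCount_le_sum_add z a hTs hTs)
    push_cast [Nat.cast_sub hTn] at hR
    simpa [f, sq] using hR
  have hbad : ∑ v ∈ V.filter P, f v ≤ (V.filter P).card * ((c - ε) * s ^ 2) := by
    simpa using Finset.sum_le_card_nsmul (V.filter P) f _ fun v hv => (Finset.mem_filter.1 hv).2.le
  have hgood : ∑ v ∈ V.filter (¬ P ·), f v ≤ (V.filter (¬ P ·)).card * ((c + η) * s ^ 2) := by
    simpa using Finset.sum_le_card_nsmul (V.filter (¬ P ·)) f _ fun v _ => hwin v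
  have hcard : ((V.filter P).card : ℝ) + (V.filter (¬ P ·)).card = T ^ 2 := by
    rw [← Nat.cast_add, Finset.card_filter_add_card_filter_not]
    simp [V, sq]
  rw [← Finset.sum_filter_add_sum_filter_not V P] at hcount
  have hs₀ : (0 : ℝ) < s ^ 2 := by positivity
  have hmass : c * n ^ 2 ≤ (V.filter P).card * (c - ε) + (V.filter (¬ P ·)).card * (c + η) +
      (n ^ 2 - T ^ 2) := by
    refine le_of_mul_le_mul_left ?_ hs₀
    linarith [mul_le_mul_of_nonneg_left hz hs₀.le]
  have hnT : (T : ℝ) ^ 2 ≤ n ^ 2 := by exact_mod_cast Nat.pow_le_pow_left (by omega) 2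
  nlinarith [mul_nonneg hc (sub_nonneg.2 hnT),
    mul_nonneg (Nat.cast_nonneg (α := ℝ) (V.filter P).card) hη]

lemma continuous_occCount [TopologicalSpace A] [DiscreteTopology A] (a : A) (k l : ℕ) :
    Continuous fun x : ℕ × ℕ → A => occCount x a k l := by
  simp only [occCount, Finset.card_filter]
  exact continuous_finsetSum _ fun p _ =>
    (continuous_of_discreteTopology (f := fun b : A => if b = a then 1 else 0)).comp
      (continuous_apply p)

end Counting

section MaxOcc

variable {A : Type*} [DecidableEq A] {X : Set (ℕ × ℕ → A)} {x : ℕ × ℕ → A} {a : A}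

lemma bddAbove_occCount_set (X : Set (ℕ × ℕ → A)) (a : A) (k l : ℕ) :
    BddAbove {m : ℕ | ∃ x ∈ X, m = occCount x a k l} :=
  ⟨k * l, by rintro _ ⟨x, -, rfl⟩; exact occCount_le x a k l⟩

lemma occCount_le_maxOcc (hx : x ∈ X) (k l : ℕ) : occCount x a k l ≤ maxOcc X a k l :=
  le_csSup (bddAbove_occCount_set X a k l) ⟨x, hx, rfl⟩

lemma exists_occCount_eq_maxOcc (hne : X.Nonempty) (a : A) (k l : ℕ) :
    ∃ z ∈ X, occCount z a k l = maxOcc X a k l := by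
  obtain ⟨x, hx⟩ := hne
  obtain ⟨z, hz, hzM⟩ := Nat.sSup_mem (s := {m | ∃ x ∈ X, m = occCount x a k l})
    ⟨_, x, hx, rfl⟩ (bddAbove_occCount_set X a k l)
  exact ⟨z, hz, hzM.symm⟩

lemma bddBelow_freqSup_set (X : Set (ℕ × ℕ → A)) (a : A) :
    BddBelow {r : ℝ | ∃ k₁ k₂ : ℕ, 1 ≤ k₁ ∧ 1 ≤ k₂ ∧ r = (maxOcc X a k₁ k₂ : ℝ) / (k₁ * k₂)} :=
  ⟨0, by rintro _ ⟨k₁, k₂, -, -, rfl⟩; positivity⟩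

lemma freqSup_nonneg (X : Set (ℕ × ℕ → A)) (a : A) : 0 ≤ freqSup X a :=
  Real.sInf_nonneg <| by rintro _ ⟨k₁, k₂, -, -, rfl⟩; positivity

lemma freqSup_le_maxOcc_div {k₁ k₂ : ℕ} (hk₁ : 0 < k₁) (hk₂ : 0 < k₂) :
    freqSup X a ≤ (maxOcc X a k₁ k₂ : ℝ) / (k₁ * k₂) :=
  csInf_le (bddBelow_freqSup_set X a) ⟨k₁, k₂, hk₁, hk₂, rfl⟩

lemma freqSup_set_nonempty (X : Set (ℕ × ℕ → A)) (a : A) :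
    {r : ℝ | ∃ k₁ k₂ : ℕ, 1 ≤ k₁ ∧ 1 ≤ k₂ ∧ r = (maxOcc X a k₁ k₂ : ℝ) / (k₁ * k₂)}.Nonempty :=
  ⟨_, 1, 1, le_rfl, le_rfl, rfl⟩

lemma le_freqSup {b : ℝ}
    (h : ∀ k₁ k₂ : ℕ, 0 < k₁ → 0 < k₂ → b ≤ (maxOcc X a k₁ k₂ : ℝ) / (k₁ * k₂)) :
    b ≤ freqSup X a :=
  le_csInf (freqSup_set_nonempty X a) <| by rintro _ ⟨k₁, k₂, hk₁, hk₂, rfl⟩; exact h k₁ k₂ hk₁ hk₂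

lemma exists_maxOcc_div_lt {b : ℝ} (h : freqSup X a < b) :
    ∃ k₁ k₂ : ℕ, 0 < k₁ ∧ 0 < k₂ ∧ (maxOcc X a k₁ k₂ : ℝ) / (k₁ * k₂) < b := by
  obtain ⟨_, ⟨k₁, k₂, hk₁, hk₂, rfl⟩, hlt⟩ := exists_lt_of_csInf_lt (freqSup_set_nonempty X a) h
  exact ⟨k₁, k₂, hk₁, hk₂, hlt⟩

end MaxOcc

section Density

variable {A : Type*} [DecidableEq A]

noncomputable def occDensity (x : ℕ × ℕ → A) (a : A) (n : ℕ × ℕ) : ℝ :=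
  occCount x a n.1 n.2 / (n.1 * n.2)

lemma occDensity_nonneg (x : ℕ × ℕ → A) (a : A) (n : ℕ × ℕ) : 0 ≤ occDensity x a n := by
  unfold occDensity
  positivity

lemma occDensity_le_one (x : ℕ × ℕ → A) (a : A) (n : ℕ × ℕ) : occDensity x a n ≤ 1 :=
  div_le_one_of_le₀ (mod_cast occCount_le x a n.1 n.2) (by positivity)

lemma upperDensity2_setOf_eq_limsup (x : ℕ × ℕ → A) (a : A) :
    upperDensity2 {p | x p = a} = limsup (occDensity x a) atTop := by
  unfold upperDensity2 occDensity occCount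
  congr with n
  rw [← Set.ncard_coe_finset]
  congr
  ext p
  simp [and_comm]

lemma tendsto_div_fst_add_div_snd (k₁ k₂ : ℝ) :
    Tendsto (fun n : ℕ × ℕ => k₁ / n.1 + k₂ / n.2 + k₁ / n.1 * (k₂ / n.2)) atTop (𝓝 0) := by
  rw [← prod_atTop_atTop_eq]
  have h₁ : Tendsto (fun n : ℕ × ℕ => k₁ / n.1) (atTop ×ˢ atTop) (𝓝 0) :=
    (tendsto_const_div_atTop_nhds_zero_nat k₁).comp tendsto_fst
  have h₂ : Tendsto (fun n : ℕ × ℕ => k₂ / n.2) (atTop ×ˢ atTop) (𝓝 0) :=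
    (tendsto_const_div_atTop_nhds_zero_nat k₂).comp tendsto_snd
  simpa using (h₁.add h₂).add (h₁.mul h₂)

lemma le_upperDensity2_of_tendsto {x : ℕ × ℕ → A} {a : A} {c : ℝ} {s : ℕ → ℕ} {ε : ℕ → ℝ}
    (hs : Tendsto s atTop atTop) (hε : Tendsto ε atTop (𝓝 0))
    (h : ∀ j, (c - ε j) * s j ^ 2 ≤ occCount x a (s j) (s j)) :
    c ≤ upperDensity2 {p | x p = a} := by
  rw [upperDensity2_setOf_eq_limsup]
  refine le_of_forall_pos_le_add fun δ hδ => ?_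
  have hdiag : Tendsto (fun j => (s j, s j)) atTop atTop := by
    rw [← prod_atTop_atTop_eq]
    exact hs.prodMk hs
  have hgood : ∀ᶠ j in atTop, c - δ ≤ occDensity x a (s j, s j) := by
    filter_upwards [hs.eventually_gt_atTop 0, hε.eventually_lt_const hδ] with j hj hεj
    rw [occDensity, le_div_iff₀ (by positivity)]
    nlinarith [h j]
  have := le_limsup_of_frequently_le (hdiag.frequently hgood.frequently)
    (isBoundedUnder_of ⟨1, occDensity_le_one x a⟩)
  linarith

end Density

lemma exists_nat_add_sq_sub_sq_mul_lt (S : ℕ) {K δ : ℝ} (hK : 0 ≤ K) (hδ : 0 < δ) :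
    ∃ T : ℕ, 0 < T ∧ (((T + S : ℕ) : ℝ) ^ 2 - T ^ 2) * K < δ * T ^ 2 := by
  obtain ⟨T, hT⟩ := exists_nat_gt (S + 3 * S * K / δ)
  have hST : (S : ℝ) < T := by linarith [div_nonneg (by positivity : 0 ≤ 3 * S * K) hδ.le]
  have hKT : 3 * S * K < δ * T := by
    rw [← div_lt_iff₀' hδ]
    linarith
  refine ⟨T, by exact_mod_cast (S.cast_nonneg.trans_lt hST), ?_⟩
  push_cast
  nlinarith [mul_nonneg (mul_nonneg (S.cast_nonneg (α := ℝ)) hK) (sub_nonneg.2 hST.le)]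

namespace IsN2Shift

variable {A : Type*} [TopologicalSpace A] {X : Set (ℕ × ℕ → A)} {x : ℕ × ℕ → A}

lemma shiftBy_mem (hX : IsN2Shift X) (hx : x ∈ X) (v : ℕ × ℕ) : shiftBy x v ∈ X := by
  obtain ⟨m, n⟩ := v
  induction n with
  | zero =>
    induction m with
    | zero => exact hx
    | succ m ih =>
      convert hX.2.1 _ ih using 2 with p
      simp only [shiftBy]
      congr 1
      ext <;> simp only [Prod.fst_add, Prod.snd_add]
      omega
  | succ n ih =>
    convert hX.2.2 _ ih using 2 with p
    simp only [shiftBy]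
    congr 1
    ext <;> simp only [Prod.fst_add, Prod.snd_add]
    omega

variable [DecidableEq A] {a : A}

lemma occCount_shiftBy_le_maxOcc (hX : IsN2Shift X) (hx : x ∈ X) (v : ℕ × ℕ) (k l : ℕ) :
    occCount (shiftBy x v) a k l ≤ maxOcc X a k l :=
  occCount_le_maxOcc (hX.shiftBy_mem hx v) k l

/-- Double counting the `k₁ × k₂` windows of the box `[0, n₁ + k₁) × [0, n₂ + k₂)`. -/
lemma mul_occCount_le (hX : IsN2Shift X) (hx : x ∈ X) (k₁ k₂ n₁ n₂ : ℕ) :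
    k₁ * k₂ * occCount x a n₁ n₂ ≤
      n₁ * n₂ * maxOcc X a k₁ k₂ + k₁ * k₂ * (k₁ * n₂ + n₁ * k₂ + k₁ * k₂) := by
  have hsub : (n₁ + k₁) * (n₂ + k₂) - n₁ * n₂ = k₁ * n₂ + n₁ * k₂ + k₁ * k₂ :=
    Nat.sub_eq_of_eq_add (by ring)
  calc k₁ * k₂ * occCount x a n₁ n₂ ≤ k₁ * k₂ * occCount x a (n₁ + k₁) (n₂ + k₂) :=
        Nat.mul_le_mul_left _ (occCount_mono x a (by omega) (by omega))
    _ ≤ ∑ v ∈ Finset.range n₁ ×ˢ Finset.range n₂, occCount (shiftBy x v) a k₁ k₂ +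
          k₁ * k₂ * ((n₁ + k₁) * (n₂ + k₂) - n₁ * n₂) :=
        mul_occCount_le_sum_add x a le_rfl le_rfl
    _ ≤ n₁ * n₂ * maxOcc X a k₁ k₂ + k₁ * k₂ * (k₁ * n₂ + n₁ * k₂ + k₁ * k₂) := by
        rw [hsub]
        gcongr
        simpa using Finset.sum_le_card_nsmul (Finset.range n₁ ×ˢ Finset.range n₂) _ _
          fun v _ => hX.occCount_shiftBy_le_maxOcc hx v (a := a) k₁ k₂

lemma occDensity_le (hX : IsN2Shift X) (hx : x ∈ X) {k₁ k₂ : ℕ} (hk₁ : 0 < k₁) (hk₂ : 0 < k₂)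
    {n : ℕ × ℕ} (hn₁ : 0 < n.1) (hn₂ : 0 < n.2) :
    occDensity x a n ≤ (maxOcc X a k₁ k₂ : ℝ) / (k₁ * k₂) +
      (k₁ / n.1 + k₂ / n.2 + k₁ / n.1 * (k₂ / n.2)) := by
  have h : (k₁ * k₂ * occCount x a n.1 n.2 : ℝ) ≤
      n.1 * n.2 * maxOcc X a k₁ k₂ + k₁ * k₂ * (k₁ * n.2 + n.1 * k₂ + k₁ * k₂) :=
    mod_cast hX.mul_occCount_le hx k₁ k₂ n.1 n.2
  rw [occDensity, div_le_iff₀ (by positivity)]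
  refine le_of_mul_le_mul_left (h.trans_eq ?_) (by positivity : (0 : ℝ) < k₁ * k₂)
  field_simp

lemma upperDensity2_le_freqSup (hX : IsN2Shift X) (hx : x ∈ X) :
    upperDensity2 {p | x p = a} ≤ freqSup X a := by
  rw [upperDensity2_setOf_eq_limsup]
  refine le_freqSup fun k₁ k₂ hk₁ hk₂ => ?_
  have hlim := (tendsto_const_nhds (x := (maxOcc X a k₁ k₂ : ℝ) / (k₁ * k₂))).add
    (tendsto_div_fst_add_div_snd k₁ k₂)
  rw [add_zero] at hlim
  refine (limsup_le_limsup ?_ (isCoboundedUnder_le_of_le atTop (occDensity_nonneg x a))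
    hlim.isBoundedUnder_le).trans_eq hlim.limsup_eq
  filter_upwards [eventually_ge_atTop (1, 1)] with n hn
  exact hX.occDensity_le hx hk₁ hk₂ hn.1 hn.2

lemma eventually_maxOcc_le (hX : IsN2Shift X) (hne : X.Nonempty) {η : ℝ} (hη : 0 < η) :
    ∀ᶠ t in atTop, (maxOcc X a t t : ℝ) ≤ (freqSup X a + η) * t ^ 2 := by
  obtain ⟨k₁, k₂, hk₁, hk₂, hlt⟩ := exists_maxOcc_div_lt (lt_add_of_pos_right (freqSup X a) hη)
  have hdiag : Tendsto (fun t : ℕ => (t, t)) atTop atTop := by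
    rw [← prod_atTop_atTop_eq]
    exact tendsto_id.prodMk tendsto_id
  have hlim := (tendsto_const_nhds (x := (maxOcc X a k₁ k₂ : ℝ) / (k₁ * k₂))).add
    ((tendsto_div_fst_add_div_snd k₁ k₂).comp hdiag)
  rw [add_zero] at hlim
  filter_upwards [hlim.eventually_lt_const hlt, eventually_gt_atTop 0] with t ht ht₀
  obtain ⟨z, hz, hzM⟩ := exists_occCount_eq_maxOcc hne a t t
  have := hX.occDensity_le hz hk₁ hk₂ (a := a) (n := (t, t)) ht₀ ht₀
  rw [occDensity, div_le_iff₀ (by positivity), hzM] at this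
  simp only [Function.comp_apply] at ht
  nlinarith

lemma exists_mem_forall_le_occCount (hX : IsN2Shift X) (hne : X.Nonempty) {ι : Type*}
    (I : Finset ι) (s : ι → ℕ) (ε δ : ι → ℝ) (hs : ∀ j ∈ I, 0 < s j) (hε : ∀ j ∈ I, 0 < ε j)
    (hδ : ∀ j ∈ I, 0 ≤ δ j) (hδI : ∑ j ∈ I, δ j < 1)
    (hM : ∀ j ∈ I, (maxOcc X a (s j) (s j) : ℝ) ≤ (freqSup X a + ε j * δ j) * s j ^ 2) :
    ∃ x ∈ X, ∀ j ∈ I, (freqSup X a - ε j) * s j ^ 2 ≤ occCount x a (s j) (s j) := by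
  set c := freqSup X a
  obtain ⟨T, hT, hTK⟩ := exists_nat_add_sq_sub_sq_mul_lt (I.sup s)
    (Finset.sum_nonneg fun j hj => (inv_pos.2 (hε j hj)).le) (sub_pos.2 hδI)
  set n := T + I.sup s
  obtain ⟨z, hz, hzM⟩ := exists_occCount_eq_maxOcc hne a n n
  have hzn : c * n ^ 2 ≤ occCount z a n n := by
    have := freqSup_le_maxOcc_div (X := X) (a := a) (k₁ := n) (k₂ := n) (by omega) (by omega)
    rw [le_div_iff₀ (by positivity), ← hzM] at this
    linarith
  set V := Finset.range T ×ˢ Finset.range T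
  set B : ι → Finset (ℕ × ℕ) := fun j =>
    V.filter fun v => (occCount (shiftBy z v) a (s j) (s j) : ℝ) < (c - ε j) * s j ^ 2
  have hB : ∀ j ∈ I, ((B j).card : ℝ) ≤ δ j * T ^ 2 + (n ^ 2 - T ^ 2) * (ε j)⁻¹ := by
    intro j hj
    have := card_filter_occCount_shiftBy_lt_mul_le (n := n) (T := T) (ε := ε j) (hs j hj)
      (by have := Finset.le_sup (f := s) hj; omega) (freqSup_nonneg X a)
      (mul_nonneg (hε j hj).le (hδ j hj))
      (fun v => (Nat.cast_le.2 (hX.occCount_shiftBy_le_maxOcc hz v _ _)).trans (hM j hj)) hzn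
    rw [← le_div_iff₀ (hε j hj)] at this
    refine this.trans_eq ?_
    have := (hε j hj).ne'
    field_simp
  have hcard : ((I.biUnion B).card : ℝ) < V.card := calc
    ((I.biUnion B).card : ℝ) ≤ ∑ j ∈ I, ((B j).card : ℝ) := mod_cast Finset.card_biUnion_le
    _ ≤ ∑ j ∈ I, (δ j * T ^ 2 + (n ^ 2 - T ^ 2) * (ε j)⁻¹) := Finset.sum_le_sum hB
    _ = (∑ j ∈ I, δ j) * T ^ 2 + (n ^ 2 - T ^ 2) * ∑ j ∈ I, (ε j)⁻¹ := by
      rw [Finset.sum_add_distrib, Finset.sum_mul, Finset.mul_sum]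
    _ < V.card := by
      simp only [V, Finset.card_product, Finset.card_range]
      push_cast
      linarith
  obtain ⟨v, hvV, hvB⟩ := Finset.exists_mem_notMem_of_card_lt_card (mod_cast hcard)
  refine ⟨shiftBy z v, hX.shiftBy_mem hz v, fun j hj => not_lt.1 fun hlt => hvB ?_⟩
  exact Finset.mem_biUnion.2 ⟨j, hj, Finset.mem_filter.2 ⟨hvV, hlt⟩⟩

end IsN2Shift

theorem exists_point_with_upperDensity_eq_freq_general
    {A : Type*} [Fintype A] [DecidableEq A] [TopologicalSpace A] [DiscreteTopology A]
    (X : Set (ℕ × ℕ → A)) (hX : IsN2Shift X) (hne : X.Nonempty) (a : A) :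
    ∃ x ∈ X, upperDensity2 {p : ℕ × ℕ | x p = a} = freqSup X a := by
  set ε : ℕ → ℝ := fun j => 1 / (j + 1)
  set δ : ℕ → ℝ := fun j => (1 / 2) ^ j / 4
  have hδ : ∀ I : Finset ℕ, ∑ j ∈ I, δ j < 1 := fun I => calc
    ∑ j ∈ I, δ j ≤ ∑' j, δ j :=
      (summable_geometric_two.div_const 4).sum_le_tsum I fun _ _ => by positivity
    _ < 1 := by simp only [δ, tsum_div_const, tsum_geometric_two]; norm_num
  have hscale (j : ℕ) : ∃ t, (maxOcc X a t t : ℝ) ≤ (freqSup X a + ε j * δ j) * t ^ 2 ∧ j < t :=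
    ((hX.eventually_maxOcc_le hne (by positivity)).and (eventually_gt_atTop j)).exists
  choose s hsM hjs using hscale
  obtain ⟨x, hxX, hx⟩ := hX.1.isCompact.inter_iInter_nonempty
    (fun j => {x | (freqSup X a - ε j) * s j ^ 2 ≤ occCount x a (s j) (s j)})
    (fun j => isClosed_le continuous_const
      (continuous_of_discreteTopology.comp (continuous_occCount a _ _)))
    fun I => by
      obtain ⟨x, hxX, hx⟩ := hX.exists_mem_forall_le_occCount hne I s ε δ
        (fun j _ => (hjs j).pos) (fun j _ => by positivity) (fun j _ => by positivity) (hδ I)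
        fun j _ => hsM j
      exact ⟨x, hxX, Set.mem_iInter₂.2 hx⟩
  exact ⟨x, hxX, le_antisymm (hX.upperDensity2_le_freqSup hxX)
    (le_upperDensity2_of_tendsto (tendsto_atTop_mono (fun j => (hjs j).le) tendsto_id)
      tendsto_one_div_add_atTop_nhds_zero_nat (Set.mem_iInter.1 hx))⟩

/-- There is a point `x ∈ X` such that the set
`χ_a(x) = {(i,j) : x_{i,j} = a}` has upper density exactly `Fr_a(X)`. -/
theorem exists_point_with_upperDensity_eq_freq
    {A : Type*} [Fintype A] [DecidableEq A] [TopologicalSpace A] [DiscreteTopology A]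
    (hA : 2 ≤ Fintype.card A)
    (X : Set (ℕ × ℕ → A)) (hX : IsN2Shift X) (hne : X.Nonempty) (a : A) :
    ∃ x ∈ X, upperDensity2 {p : ℕ × ℕ | x p = a} = freqSup X a :=
  exists_point_with_upperDensity_eq_freq_general X hX hne a
end

section
/- Let T be an expandable tree (γ_T > 1) and let 𝒯_A ⊆ {0,1}^T be the tree-shift of finite type consisting of all t : T → {0,1} such that no vertex labeled 1 has a child labeled 0 (transitions governed by A = [[1,1],[0,1]]). Then 𝒯_A has positive entropy: h(𝒯_A) > 0. -/
open Filter

/-- A (rooted, locally finite) tree realized as a set of finite words over the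
`d` generators: it contains the root (the empty word) and is closed under prefixes. -/
def IsTree {d : ℕ} (T : Set (List (Fin d))) : Prop :=
  ([] : List (Fin d)) ∈ T ∧ ∀ w ∈ T, ∀ u : List (Fin d), u <+: w → u ∈ T

/-- `T_n`: the set of vertices of `T` at distance `n` from the root. -/
def level {d : ℕ} (T : Set (List (Fin d))) (n : ℕ) : Set (List (Fin d)) :=
  {w ∈ T | w.length = n}

/-- `Δ_n = ∪_{i=0}^n T_i`: the set of vertices of `T` at distance at most `n`. -/
def ball {d : ℕ} (T : Set (List (Fin d))) (n : ℕ) : Set (List (Fin d)) :=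
  {w ∈ T | w.length ≤ n}

/-- The statement that the expanding number `γ_T = lim_n |T_{n+1}|/|T_n|` exists
and equals `γ`. -/
def HasExpandingNumber {d : ℕ} (T : Set (List (Fin d))) (γ : ℝ) : Prop :=
  Tendsto (fun n : ℕ => ((level T (n + 1)).ncard : ℝ) / ((level T n).ncard : ℝ)) atTop (nhds γ)

/-- `|P(Δ_n, 𝒯)|`: the number of restrictions of labeled trees of `𝒯` to `Δ_n`. -/
noncomputable def ballBlockCount {d : ℕ} {A : Type*} (T : Set (List (Fin d)))
    (𝒯 : Set (List (Fin d) → A)) (n : ℕ) : ℕ :=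
  Set.ncard ((fun t (w : ball T n) => t (w : List (Fin d))) '' 𝒯)

/-- The entropy of a tree-shift, `h(𝒯) = limsup_n log |P(Δ_n,𝒯)| / |Δ_n|`. -/
noncomputable def treeEntropy {d : ℕ} {A : Type*} (T : Set (List (Fin d)))
    (𝒯 : Set (List (Fin d) → A)) : ℝ :=
  limsup (fun n : ℕ => Real.log (ballBlockCount T 𝒯 n) / ((ball T n).ncard : ℝ)) atTop

/-- `S` is an independence set for `𝒯`: every assignment of symbols on `S`
extends to an element of `𝒯`. -/
def IsIndepSet {I A : Type*} (𝒯 : Set (I → A)) (S : Set I) : Prop :=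
  ∀ u : I → A, ∃ t ∈ 𝒯, ∀ w ∈ S, t w = u w

/-- The tree-shift of finite type `𝒯_A ⊆ {0,1}^T` governed by the matrix
`A = [[1,1],[0,1]]`: no vertex labeled `1` (`true`) has a child labeled `0` (`false`). -/
def treeShiftA {d : ℕ} (T : Set (List (Fin d))) : Set (List (Fin d) → Bool) :=
  {t | ∀ g ∈ T, ∀ i : Fin d, g ++ [i] ∈ T → ¬ (t g = true ∧ t (g ++ [i]) = false)}

variable {d : ℕ} (T : Set (List (Fin d)))

lemma level_finite (n : ℕ) : (level T n).Finite :=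
  (List.finite_length_eq (Fin d) n).subset fun _ hw => hw.2

lemma ball_finite (n : ℕ) : (ball T n).Finite :=
  (List.finite_length_le (Fin d) n).subset fun _ hw => hw.2

lemma ball_succ (n : ℕ) : ball T (n + 1) = ball T n ∪ level T (n + 1) := by
  ext w
  simp only [ball, level, Set.mem_setOf_eq, Set.mem_union]
  constructor
  · rintro ⟨hw, hl⟩
    rcases Nat.lt_or_ge w.length (n + 1) with h | h
    · exact Or.inl ⟨hw, Nat.lt_succ_iff.mp h⟩
    · exact Or.inr ⟨hw, le_antisymm hl h⟩
  · rintro (⟨hw, h⟩ | ⟨hw, h⟩) <;> exact ⟨hw, by omega⟩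

lemma ball_ncard_succ (n : ℕ) :
    (ball T (n + 1)).ncard = (ball T n).ncard + (level T (n + 1)).ncard := by
  rw [ball_succ, Set.ncard_union_eq _ (ball_finite T n) (level_finite T (n + 1))]
  rw [Set.disjoint_left]
  rintro w ⟨_, hle⟩ ⟨_, heq⟩
  omega

lemma two_pow_le_count (n : ℕ) :
    2 ^ (level T n).ncard ≤ ballBlockCount T (treeShiftA T) n := by
  classical
  haveI : Finite ↥(ball T n) := (ball_finite T n).to_subtype
  haveI : Finite ↥(level T n) := (level_finite T n).to_subtype
  set ext : (↥(level T n) → Bool) → (List (Fin d) → Bool) :=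
    fun v w => if h : w ∈ level T n then v ⟨w, h⟩ else decide (n < w.length) with hext
  have hmem : ∀ v, ext v ∈ treeShiftA T := by
    intro v g _ i _
    rintro ⟨h1, h2⟩
    have hlen : (g ++ [i]).length = g.length + 1 := by simp
    by_cases hg : g ∈ level T n
    · have : ¬ (g ++ [i] ∈ level T n) := by
        intro hc; have := hc.2; have := hg.2; omega
      rw [hext] at h2
      simp only [this, dite_false] at h2
      have := hg.2
      simp only [decide_eq_false_iff_not, not_lt] at h2
      omega
    · rw [hext] at h1 h2
      simp only [hg, dite_false, decide_eq_true_eq] at h1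
      have : ¬ (g ++ [i] ∈ level T n) := by
        intro hc; have := hc.2; omega
      simp only [this, dite_false, decide_eq_false_iff_not, not_lt] at h2
      omega
  set ψ : (↥(level T n) → Bool) → (↥(ball T n) → Bool) :=
    fun v w => ext v w with hψ
  have hinj : Function.Injective ψ := by
    intro v v' h
    funext x
    have hx : (x : List (Fin d)) ∈ ball T n := ⟨x.2.1, le_of_eq x.2.2⟩
    have := congrFun h ⟨x, hx⟩
    simp only [hψ, hext, x.2, dite_true] at this
    simpa using this
  have hsub : ψ '' Set.univ ⊆ (fun t (w : ball T n) => t (w : List (Fin d))) '' treeShiftA T := by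
    rintro _ ⟨v, -, rfl⟩
    exact ⟨ext v, hmem v, rfl⟩
  have hfin : ((fun t (w : ball T n) => t (w : List (Fin d))) '' treeShiftA T).Finite :=
    Set.toFinite _
  calc 2 ^ (level T n).ncard = Nat.card (↥(level T n) → Bool) := by
        rw [Nat.card_fun]
        simp [Nat.card_coe_set_eq]
    _ = (Set.univ : Set (↥(level T n) → Bool)).ncard := (Set.ncard_univ _).symm
    _ = (ψ '' Set.univ).ncard := (Set.ncard_image_of_injective _ hinj).symm
    _ ≤ ballBlockCount T (treeShiftA T) n := Set.ncard_le_ncard hsub hfin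

lemma count_le_two_pow (n : ℕ) :
    ballBlockCount T (treeShiftA T) n ≤ 2 ^ (ball T n).ncard := by
  haveI : Finite ↥(ball T n) := (ball_finite T n).to_subtype
  calc ballBlockCount T (treeShiftA T) n
      ≤ (Set.univ : Set (↥(ball T n) → Bool)).ncard :=
        Set.ncard_le_ncard (Set.subset_univ _) Set.finite_univ
    _ = Nat.card (↥(ball T n) → Bool) := Set.ncard_univ _
    _ = 2 ^ (ball T n).ncard := by rw [Nat.card_fun]; simp [Nat.card_coe_set_eq]

/-- On an expandable tree (`γ_T > 1`), the tree-shift `𝒯_A`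
has positive entropy. -/
theorem treeShiftA_pos_entropy
    (d : ℕ) (T : Set (List (Fin d))) (hT : IsTree T)
    (γ : ℝ) (hγ : HasExpandingNumber T γ) (hγ1 : 1 < γ) :
    0 < treeEntropy T (treeShiftA T) := by
  set r : ℝ := (1 + γ) / 2 with hr
  have hr1 : 1 < r := by rw [hr]; linarith
  have hrγ : r < γ := by rw [hr]; linarith
  obtain ⟨N, hN⟩ := eventually_atTop.mp (hγ.eventually (eventually_gt_nhds hrγ))
  have hApos : ∀ n ≥ N, (0 : ℝ) < ((level T n).ncard : ℝ) := by
    intro n hn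
    rcases eq_or_lt_of_le (by positivity : (0 : ℝ) ≤ ((level T n).ncard : ℝ)) with h | h
    · exfalso; have h2 := hN n hn; rw [← h, div_zero] at h2; linarith
    · exact h
  have hAgrow : ∀ n ≥ N, r * ((level T n).ncard : ℝ) < ((level T (n + 1)).ncard : ℝ) := by
    intro n hn
    have h2 := hN n hn
    rwa [lt_div_iff₀ (hApos n hn)] at h2
  have hB1 : ∀ n, (1 : ℝ) ≤ ((ball T n).ncard : ℝ) := by
    intro n
    have hne : (ball T n).Nonempty := ⟨[], hT.1, by simp⟩
    have h0 : 0 < (ball T n).ncard := (Set.ncard_pos (ball_finite T n)).mpr hne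
    exact_mod_cast h0
  have hBsucc : ∀ n, ((ball T (n + 1)).ncard : ℝ)
      = ((ball T n).ncard : ℝ) + ((level T (n + 1)).ncard : ℝ) := by
    intro n
    rw [ball_ncard_succ T n]
    push_cast
    ring
  set K : ℝ := max (r / (r - 1)) (((ball T N).ncard : ℝ) / ((level T N).ncard : ℝ)) with hK
  have hK1 : r / (r - 1) ≤ K := le_max_left _ _
  have hKpos : 0 < K :=
    lt_of_lt_of_le (div_pos (by linarith) (by linarith)) hK1
  have hkey : ∀ n ≥ N, ((ball T n).ncard : ℝ) ≤ K * ((level T n).ncard : ℝ) := by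
    intro n hn
    induction n, hn using Nat.le_induction with
    | base =>
      have h2 := hApos N le_rfl
      calc ((ball T N).ncard : ℝ)
          = ((ball T N).ncard : ℝ) / ((level T N).ncard : ℝ) * ((level T N).ncard : ℝ) := by
            field_simp
        _ ≤ K * ((level T N).ncard : ℝ) := mul_le_mul_of_nonneg_right (le_max_right _ _) h2.le
    | succ n hn ih =>
      have h1 := hAgrow n hn
      have h2 := hApos n hn
      have h4 : (0 : ℝ) < ((level T (n + 1)).ncard : ℝ) := hApos (n + 1) (by omega)
      have h3 : ((level T n).ncard : ℝ) ≤ ((level T (n + 1)).ncard : ℝ) / r := by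
        rw [le_div_iff₀ (by linarith : (0 : ℝ) < r)]
        nlinarith
      have h5 : r ≤ K * (r - 1) := (div_le_iff₀ (by linarith)).mp hK1
      have h6 : K / r + 1 ≤ K := by
        have h7 : K / r ≤ K - 1 := by
          rw [div_le_iff₀ (by linarith : (0 : ℝ) < r)]
          nlinarith
        linarith
      rw [hBsucc]
      calc ((ball T n).ncard : ℝ) + ((level T (n + 1)).ncard : ℝ)
          ≤ K * ((level T n).ncard : ℝ) + ((level T (n + 1)).ncard : ℝ) := by linarith
        _ ≤ K * (((level T (n + 1)).ncard : ℝ) / r) + ((level T (n + 1)).ncard : ℝ) := by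
            have := mul_le_mul_of_nonneg_left h3 hKpos.le
            linarith
        _ = (K / r + 1) * ((level T (n + 1)).ncard : ℝ) := by ring
        _ ≤ K * ((level T (n + 1)).ncard : ℝ) := mul_le_mul_of_nonneg_right h6 h4.le
  set f : ℕ → ℝ :=
    fun n => Real.log (ballBlockCount T (treeShiftA T) n) / ((ball T n).ncard : ℝ) with hf
  have hub : ∀ n, f n ≤ Real.log 2 := by
    intro n
    have hBpos : (0 : ℝ) < ((ball T n).ncard : ℝ) := lt_of_lt_of_le one_pos (hB1 n)
    have hcnt1 : (1 : ℕ) ≤ ballBlockCount T (treeShiftA T) n :=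
      le_trans Nat.one_le_two_pow (two_pow_le_count T n)
    have h1 : (ballBlockCount T (treeShiftA T) n : ℝ) ≤ 2 ^ (ball T n).ncard := by
      exact_mod_cast count_le_two_pow T n
    have h2 : Real.log (ballBlockCount T (treeShiftA T) n)
        ≤ ((ball T n).ncard : ℝ) * Real.log 2 := by
      have := Real.log_le_log (by exact_mod_cast hcnt1) h1
      rwa [Real.log_pow] at this
    show Real.log (ballBlockCount T (treeShiftA T) n) / ((ball T n).ncard : ℝ) ≤ Real.log 2
    rw [div_le_iff₀ hBpos]
    linarith
  have hbdd : IsBoundedUnder (· ≤ ·) atTop f := isBoundedUnder_of ⟨Real.log 2, hub⟩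
  have hlow : ∀ n ≥ N, Real.log 2 / K ≤ f n := by
    intro n hn
    have hApn := hApos n hn
    have hBpos : (0 : ℝ) < ((ball T n).ncard : ℝ) := lt_of_lt_of_le one_pos (hB1 n)
    have hcnt : (2 : ℝ) ^ (level T n).ncard ≤ (ballBlockCount T (treeShiftA T) n : ℝ) := by
      exact_mod_cast two_pow_le_count T n
    have hlog : ((level T n).ncard : ℝ) * Real.log 2
        ≤ Real.log (ballBlockCount T (treeShiftA T) n) := by
      have := Real.log_le_log (by positivity) hcnt
      rwa [Real.log_pow] at this
    have hkn := hkey n hn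
    have hl2 : (0 : ℝ) ≤ Real.log 2 := Real.log_nonneg one_le_two
    show Real.log 2 / K
        ≤ Real.log (ballBlockCount T (treeShiftA T) n) / ((ball T n).ncard : ℝ)
    rw [div_le_div_iff₀ hKpos hBpos]
    nlinarith
  have hfreq : ∃ᶠ n in atTop, Real.log 2 / K ≤ f n :=
    (eventually_atTop.mpr ⟨N, hlow⟩).frequently
  have hle : Real.log 2 / K ≤ limsup f atTop := le_limsup_of_frequently_le hfreq hbdd
  have hc : 0 < Real.log 2 / K := div_pos (Real.log_pos one_lt_two) hKpos
  have heq : treeEntropy T (treeShiftA T) = limsup f atTop := rfl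
  rw [heq]
  linarith
end
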